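/- Van Benthem characterization theorem for LHS: a first-order formula α(x,y) in the correspondence language is invariant under LHS-bisimulation if and only if α is logically equivalent to the standard translation T_{x,y}(φ) of some LHS formula φ. -/

import Mathlib

inductive LHSForm : Type
  | pl : ℕ → LHSForm
  | pr : ℕ → LHSForm
  | I : LHSForm
  | neg : LHSForm → LHSForm
  | and : LHSForm → LHSForm → LHSForm
  | box : LHSForm → LHSForm
  | bbox : LHSForm → LHSForm
  deriving DecidableEq

def LHSForm.or (φ ψ : LHSForm) : LHSForm := .neg (.and φ.neg ψ.neg)
def LHSForm.imp (φ ψ : LHSForm) : LHSForm := .neg (.and φ ψ.neg)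
def LHSForm.iff (φ ψ : LHSForm) : LHSForm := .and (φ.imp ψ) (ψ.imp φ)
def LHSForm.dia (φ : LHSForm) : LHSForm := .neg (.box φ.neg)
def LHSForm.bdia (φ : LHSForm) : LHSForm := .neg (.bbox φ.neg)

structure LHSModel where
  W : Type
  R : W → W → Prop
  Vl : ℕ → W → Prop
  Vr : ℕ → W → Prop

def LHSModel.sat (M : LHSModel) : M.W → M.W → LHSForm → Prop
  | s, _, .pl i => M.Vl i s
  | _, t, .pr i => M.Vr i t
  | s, t, .I => s = t
  | s, t, .neg φ => ¬ M.sat s t φ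
  | s, t, .and φ ψ => M.sat s t φ ∧ M.sat s t ψ
  | s, t, .box φ => ∀ s', M.R s s' → M.sat s' t φ
  | s, t, .bbox φ => ∀ t', M.R t t' → M.sat s t' φ

/-- Z is an LHS-bisimulation between M and M'. -/
def IsBisim (M M' : LHSModel) (Z : M.W × M.W → M'.W × M'.W → Prop) : Prop :=
  ∀ s t s' t', Z (s, t) (s', t') →
    (∀ i, M.Vl i s ↔ M'.Vl i s') ∧
    (∀ i, M.Vr i t ↔ M'.Vr i t') ∧
    (s = t ↔ s' = t') ∧
    (∀ v, M.R s v → ∃ v', M'.R s' v' ∧ Z (v, t) (v', t')) ∧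
    (∀ v, M.R t v → ∃ v', M'.R t' v' ∧ Z (s, v) (s', v')) ∧
    (∀ v', M'.R s' v' → ∃ v, M.R s v ∧ Z (v, t) (v', t')) ∧
    (∀ v', M'.R t' v' → ∃ v, M.R t v ∧ Z (s, v) (s', v'))

/-- First-order correspondence language: unary predicates P^l_i, P^r_i,
binary relation R, equality; variables are natural numbers. -/
inductive FOForm : Type
  | pl : ℕ → ℕ → FOForm
  | pr : ℕ → ℕ → FOForm
  | rel : ℕ → ℕ → FOForm
  | eq : ℕ → ℕ → FOForm
  | neg : FOForm → FOForm
  | and : FOForm → FOForm → FOForm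
  | imp : FOForm → FOForm → FOForm
  | all : ℕ → FOForm → FOForm

/-- First-order satisfaction in an LHS model viewed as an L¹-structure. -/
def FOsat (M : LHSModel) : (ℕ → M.W) → FOForm → Prop
  | g, .pl i x => M.Vl i (g x)
  | g, .pr i y => M.Vr i (g y)
  | g, .rel x y => M.R (g x) (g y)
  | g, .eq x y => g x = g y
  | g, .neg α => ¬ FOsat M g α
  | g, .and α β => FOsat M g α ∧ FOsat M g β
  | g, .imp α β => FOsat M g α → FOsat M g β
  | g, .all x α => ∀ w, FOsat M (Function.update g x w) α

/-- Free variables of a first-order formula. -/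
def FOForm.freeVars : FOForm → Set ℕ
  | .pl _ x => {x}
  | .pr _ y => {y}
  | .rel x y => {x, y}
  | .eq x y => {x, y}
  | .neg α => α.freeVars
  | .and α β => α.freeVars ∪ β.freeVars
  | .imp α β => α.freeVars ∪ β.freeVars
  | .all x α => α.freeVars \ {x}

/-- The standard translation T_{x,y} of LHS into the correspondence
language; the fresh variable used at a modal step is `max x y + 1`. -/
def stTr : ℕ → ℕ → LHSForm → FOForm
  | x, _, .pl i => .pl i x
  | _, y, .pr i => .pr i y
  | x, y, .I => .eq x y
  | x, y, .neg φ => .neg (stTr x y φ)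
  | x, y, .and φ ψ => .and (stTr x y φ) (stTr x y ψ)
  | x, y, .box φ => .all (max x y + 1) (.imp (.rel x (max x y + 1)) (stTr (max x y + 1) y φ))
  | x, y, .bbox φ => .all (max x y + 1) (.imp (.rel y (max x y + 1)) (stTr x (max x y + 1) φ))

/-- α(x,y) (with free variables among x = 0, y = 1) is invariant for
LHS-bisimulation. -/
def InvariantForLHSBisim (α : FOForm) : Prop :=
  ∀ (M M' : LHSModel) (Z : M.W × M.W → M'.W × M'.W → Prop)
    (s t : M.W) (s' t' : M'.W), IsBisim M M' Z → Z (s, t) (s', t') →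
    (FOsat M (fun n => if n = 0 then s else t) α ↔
      FOsat M' (fun n => if n = 0 then s' else t') α)

/-!
Modal formulas are invariant under LHS-bisimulation, which gives one direction. Conversely, let
`α` be invariant and let `Θ` be the set of its modal consequences. If a pair of states satisfies
`Θ`, then by compactness `α` is consistent with the full modal theory of that pair, so some pair
satisfying `α` is modally equivalent to it. Ultrapowers over a nonprincipal ultrafilter on `ℕ`
preserve first-order truth (Łoś) and modal truth at the diagonal, and in them modal equivalence is
an LHS-bisimulation, because they realize every finitely satisfiable set of modal formulas at a
successor. Invariance therefore carries `α` over to the given pair, so `Θ` entails `α`, and by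
compactness again a finite conjunction of formulas of `Θ` is equivalent to `α`.
-/

open Filter

theorem fosat_congr {M : LHSModel} (α : FOForm) {g g' : ℕ → M.W}
    (h : ∀ n ∈ α.freeVars, g n = g' n) : FOsat M g α ↔ FOsat M g' α := by
  induction α generalizing g g' with
  | pl | pr | rel | eq => simp_all [FOsat, FOForm.freeVars]
  | neg β ih => exact not_congr (ih h)
  | and β γ ihβ ihγ =>
    exact and_congr (ihβ fun n hn => h n (.inl hn)) (ihγ fun n hn => h n (.inr hn))
  | imp β γ ihβ ihγ =>
    exact imp_congr (ihβ fun n hn => h n (.inl hn)) (ihγ fun n hn => h n (.inr hn))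
  | all x β ih =>
    refine forall_congr' fun w => ih fun n hn => ?_
    by_cases hnx : n = x
    · simp [hnx]
    · simpa [hnx] using h n ⟨hn, hnx⟩

theorem fosat_iff_of_freeVars_subset {M : LHSModel} {α : FOForm} (hfv : α.freeVars ⊆ {0, 1})
    (g : ℕ → M.W) : FOsat M g α ↔ FOsat M (fun n => if n = 0 then g 0 else g 1) α :=
  fosat_congr α fun n hn => by rcases hfv hn with rfl | rfl <;> simp

theorem fosat_stTr (M : LHSModel) (φ : LHSForm) (x y : ℕ) (g : ℕ → M.W) :
    FOsat M g (stTr x y φ) ↔ M.sat (g x) (g y) φ := by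
  induction φ generalizing x y g with
  | pl | pr | I => rfl
  | neg φ ih => exact not_congr (ih x y g)
  | and φ ψ ihφ ihψ => exact and_congr (ihφ x y g) (ihψ x y g)
  | box φ ih =>
    have hx : x ≠ max x y + 1 := by omega
    have hy : y ≠ max x y + 1 := by omega
    simp [stTr, FOsat, LHSModel.sat, ih, hx, hy]
  | bbox φ ih =>
    have hx : x ≠ max x y + 1 := by omega
    have hy : y ≠ max x y + 1 := by omega
    simp [stTr, FOsat, LHSModel.sat, ih, hx, hy]

theorem IsBisim.sat_iff {M M' : LHSModel} {Z : M.W × M.W → M'.W × M'.W → Prop}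
    (hZ : IsBisim M M' Z) (φ : LHSForm) {s t : M.W} {s' t' : M'.W} (h : Z (s, t) (s', t')) :
    M.sat s t φ ↔ M'.sat s' t' φ := by
  induction φ generalizing s t s' t' with
  | pl i => exact (hZ s t s' t' h).1 i
  | pr i => exact (hZ s t s' t' h).2.1 i
  | I => exact (hZ s t s' t' h).2.2.1
  | neg φ ih => exact not_congr (ih h)
  | and φ ψ ihφ ihψ => exact and_congr (ihφ h) (ihψ h)
  | box φ ih =>
    obtain ⟨-, -, -, forth, -, back, -⟩ := hZ s t s' t' h
    exact ⟨fun hs v' hv' => let ⟨v, hv, hZv⟩ := back v' hv'; (ih hZv).1 (hs v hv),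
      fun hs v hv => let ⟨v', hv', hZv⟩ := forth v hv; (ih hZv).2 (hs v' hv')⟩
  | bbox φ ih =>
    obtain ⟨-, -, -, -, forth, -, back⟩ := hZ s t s' t' h
    exact ⟨fun hs v' hv' => let ⟨v, hv, hZv⟩ := back v' hv'; (ih hZv).1 (hs v hv),
      fun hs v hv => let ⟨v', hv', hZv⟩ := forth v hv; (ih hZv).2 (hs v' hv')⟩

namespace LHSForm

def top : LHSForm := .imp .I .I

noncomputable def bigAnd (F : Finset LHSForm) : LHSForm := F.toList.foldr .and top

def code : LHSForm → ℕ
  | pl i => Nat.pair 0 i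
  | pr i => Nat.pair 1 i
  | I => Nat.pair 2 0
  | neg φ => Nat.pair 3 φ.code
  | and φ ψ => Nat.pair 4 (Nat.pair φ.code ψ.code)
  | box φ => Nat.pair 5 φ.code
  | bbox φ => Nat.pair 6 φ.code

theorem code_injective : Function.Injective code := by
  intro φ ψ h
  induction φ generalizing ψ <;> cases ψ <;> simp only [code, Nat.pair_eq_pair] at h <;> grind

instance : Countable LHSForm := code_injective.countable

instance : Nonempty LHSForm := ⟨I⟩

end LHSForm

namespace LHSModel

variable (M : LHSModel)

theorem sat_bigAnd {s t : M.W} (F : Finset LHSForm) :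
    M.sat s t (.bigAnd F) ↔ ∀ φ ∈ F, M.sat s t φ := by
  suffices ∀ L : List LHSForm, M.sat s t (L.foldr .and .top) ↔ ∀ φ ∈ L, M.sat s t φ by
    simpa [LHSForm.bigAnd] using this F.toList
  intro L
  induction L with
  | nil => simp [LHSForm.top, LHSForm.imp, sat]
  | cons φ L ih => simp [sat, ih]

theorem sat_dia {s t : M.W} (φ : LHSForm) :
    M.sat s t (.dia φ) ↔ ∃ v, M.R s v ∧ M.sat v t φ := by
  simp [LHSForm.dia, sat]

theorem sat_bdia {s t : M.W} (φ : LHSForm) :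
    M.sat s t (.bdia φ) ↔ ∃ v, M.R t v ∧ M.sat s v φ := by
  simp [LHSForm.bdia, sat]

end LHSModel

theorem Ultrafilter.forall_eventually_iff_eventually_forall {I : Type*} {X : I → Type*}
    (U : Ultrafilter I) (x₀ : ∀ i, X i) {P : ∀ i, X i → Prop} :
    (∀ x : ∀ i, X i, ∀ᶠ i in U, P i (x i)) ↔ ∀ᶠ i in U, ∀ y, P i y := by
  classical
  refine ⟨fun h => ?_, fun h x => h.mono fun i hi => hi (x i)⟩
  by_contra hne
  rw [← Ultrafilter.eventually_not] at hne
  let x i := if hi : ∃ y, ¬P i y then hi.choose else x₀ i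
  refine Ultrafilter.eventually_not.1 (hne.mono fun i hi => ?_) (h x)
  have hi : ∃ y, ¬P i y := not_forall.1 hi
  simpa only [x, dif_pos hi] using hi.choose_spec

namespace LHSModel

section Ultraproduct

variable {I : Type} (U : Ultrafilter I) (Ms : I → LHSModel)

def ultraproduct : LHSModel where
  W := (U : Filter I).Product fun i => (Ms i).W
  R := Quotient.lift₂ (fun f g => ∀ᶠ i in U, (Ms i).R (f i) (g i)) fun f g f' g' hf hg => by
    refine propext (eventually_congr ?_)
    filter_upwards [(hf : ∀ᶠ i in U, f i = f' i), (hg : ∀ᶠ i in U, g i = g' i)]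
      with i hfi hgi
    rw [hfi, hgi]
  Vl n := Quotient.lift (fun f => ∀ᶠ i in U, (Ms i).Vl n (f i)) fun f f' hf => by
    refine propext (eventually_congr ?_)
    filter_upwards [(hf : ∀ᶠ i in U, f i = f' i)] with i hfi
    rw [hfi]
  Vr n := Quotient.lift (fun f => ∀ᶠ i in U, (Ms i).Vr n (f i)) fun f f' hf => by
    refine propext (eventually_congr ?_)
    filter_upwards [(hf : ∀ᶠ i in U, f i = f' i)] with i hfi
    rw [hfi]

theorem fosat_ultraproduct_iff (α : FOForm) (G : ℕ → ∀ i, (Ms i).W) :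
    FOsat (ultraproduct U Ms) (fun n => ⟦G n⟧) α ↔
      ∀ᶠ i in U, FOsat (Ms i) (fun n => G n i) α := by
  induction α generalizing G with
  | pl | pr | rel => rfl
  | eq => exact Quotient.eq
  | neg β ih => exact (not_congr (ih G)).trans Ultrafilter.eventually_not.symm
  | and β γ ihβ ihγ => exact (and_congr (ihβ G) (ihγ G)).trans eventually_and.symm
  | imp β γ ihβ ihγ => exact (imp_congr (ihβ G) (ihγ G)).trans Ultrafilter.eventually_imp.symm
  | all x β ih =>
    have hupd (f : ∀ i, (Ms i).W) :
        Function.update (β := fun _ => (ultraproduct U Ms).W) (fun n => ⟦G n⟧) x ⟦f⟧ =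
          fun n => ⟦Function.update G x f n⟧ :=
      funext fun n => (Function.apply_update (fun _ => Quotient.mk _) G x f n).symm
    have hupd' (f : ∀ i, (Ms i).W) (i : I) :
        (fun n => Function.update G x f n i) = Function.update (fun n => G n i) x (f i) :=
      funext fun n => Function.apply_update (fun _ g => g i) G x f n
    refine Quotient.forall.trans ?_
    refine (forall_congr' fun f => ?_).trans (U.forall_eventually_iff_eventually_forall (G x))
    rw [hupd f, ih]
    simp only [hupd' f]

abbrev ultrapower (N : LHSModel) : LHSModel := ultraproduct U fun _ => N

def toUltrapower (N : LHSModel) (x : N.W) : (N.ultrapower U).W := ⟦fun _ => x⟧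

theorem fosat_toUltrapower_iff (N : LHSModel) (g : ℕ → N.W) (α : FOForm) :
    FOsat (N.ultrapower U) (fun n => N.toUltrapower U (g n)) α ↔ FOsat N g α :=
  (fosat_ultraproduct_iff U _ α fun n _ => g n).trans eventually_const

theorem sat_ultrapower_mk_iff (N : LHSModel) (f g : I → N.W) (φ : LHSForm) :
    (N.ultrapower U).sat ⟦f⟧ ⟦g⟧ φ ↔ ∀ᶠ i in U, N.sat (f i) (g i) φ := by
  refine (fosat_stTr (N.ultrapower U) φ 0 1 fun n => ⟦if n = 0 then f else g⟧).symm.trans ?_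
  refine (fosat_ultraproduct_iff U _ _ _).trans ?_
  simp [fosat_stTr]

theorem sat_toUltrapower_iff (N : LHSModel) (s t : N.W) (φ : LHSForm) :
    (N.ultrapower U).sat (N.toUltrapower U s) (N.toUltrapower U t) φ ↔ N.sat s t φ :=
  (sat_ultrapower_mk_iff U N _ _ φ).trans eventually_const

end Ultraproduct

end LHSModel

theorem exists_forall_eventually_hyperfilter {X α : Type*} [Countable α] [Nonempty α]
    (Q : ℕ → X → Prop) (A : ℕ → X → α → Prop) (T : Set α)
    (h : ∀ F : Finset α, ↑F ⊆ T →
      ∀ᶠ i in hyperfilter ℕ, ∃ x, Q i x ∧ ∀ a ∈ F, A i x a) :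
    ∃ v : ℕ → X, (∀ᶠ i in hyperfilter ℕ, Q i (v i)) ∧
      ∀ a ∈ T, ∀ᶠ i in hyperfilter ℕ, A i (v i) a := by
  classical
  obtain ⟨e, he⟩ := exists_surjective_nat α
  let F n : Finset α := ((Finset.range n).image e).filter (· ∈ T)
  let S n : Set ℕ := {i | ∃ x, Q i x ∧ ∀ a ∈ F n, A i x a}
  have hS n : S n ∈ hyperfilter ℕ := h (F n) fun a ha => (Finset.mem_filter.1 ha).2
  -- At index `i` we only realize the first `m i ≤ i` conditions; `m i` is unbounded along the
  -- hyperfilter because it is finer than the cofinite filter.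
  let m i := Nat.findGreatest (fun n => i ∈ S n) i
  have hSm {n i : ℕ} (hn : n ≤ i) (hi : i ∈ S n) : i ∈ S (m i) :=
    Nat.findGreatest_spec (P := fun n => i ∈ S n) hn hi
  obtain ⟨-, x₀, -⟩ := nonempty_of_mem (hS 0)
  have hv i : ∃ x, i ∈ S (m i) → Q i x ∧ ∀ a ∈ F (m i), A i x a := by
    by_cases hi : i ∈ S (m i)
    · exact hi.imp fun x hx _ => hx
    · exact ⟨x₀, fun h => absurd h hi⟩
  choose v hv using hv
  refine ⟨v, mem_of_superset (hS 0) fun i hi => (hv i (hSm i.zero_le hi)).1, fun a ha => ?_⟩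
  obtain ⟨k, rfl⟩ := he a
  have hge : ∀ᶠ i in hyperfilter ℕ, k + 1 ≤ i :=
    hyperfilter_le_cofinite (Nat.cofinite_eq_atTop ▸ eventually_ge_atTop (k + 1))
  filter_upwards [hS (k + 1), hge] with i hi hki
  refine (hv i (hSm hki hi)).2 _ (Finset.mem_filter.2 ⟨Finset.mem_image_of_mem e ?_, ha⟩)
  exact Finset.mem_range.2 (Nat.lt_of_lt_of_le k.lt_succ_self (Nat.le_findGreatest hki hi))

namespace LHSModel

def IsModallySaturated (M : LHSModel) : Prop :=
  ∀ (s t : M.W) (T : Set LHSForm),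
    ((∀ F : Finset LHSForm, ↑F ⊆ T → ∃ v, M.R s v ∧ ∀ φ ∈ F, M.sat v t φ) →
      ∃ v, M.R s v ∧ ∀ φ ∈ T, M.sat v t φ) ∧
    ((∀ F : Finset LHSForm, ↑F ⊆ T → ∃ v, M.R t v ∧ ∀ φ ∈ F, M.sat s v φ) →
      ∃ v, M.R t v ∧ ∀ φ ∈ T, M.sat s v φ)

theorem isModallySaturated_ultrapower (N : LHSModel) :
    (N.ultrapower (hyperfilter ℕ)).IsModallySaturated := by
  intro s t T
  induction s using Quotient.inductionOn with | h f => ?_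
  induction t using Quotient.inductionOn with | h g => ?_
  constructor
  · intro hfin
    obtain ⟨v, hR, hT⟩ := exists_forall_eventually_hyperfilter (fun i w => N.R (f i) w)
      (fun i w φ => N.sat w (g i) φ) T fun F hF => by
        obtain ⟨v, hv, hvF⟩ := hfin F hF
        have hdia : (N.ultrapower _).sat ⟦f⟧ ⟦g⟧ (.dia (.bigAnd F)) :=
          (sat_dia _ _).2 ⟨v, hv, (sat_bigAnd _ F).2 hvF⟩
        simpa only [sat_ultrapower_mk_iff, sat_dia, sat_bigAnd] using hdia
    exact ⟨⟦v⟧, hR, fun φ hφ => (sat_ultrapower_mk_iff _ N v g φ).2 (hT φ hφ)⟩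
  · intro hfin
    obtain ⟨v, hR, hT⟩ := exists_forall_eventually_hyperfilter (fun i w => N.R (g i) w)
      (fun i w φ => N.sat (f i) w φ) T fun F hF => by
        obtain ⟨v, hv, hvF⟩ := hfin F hF
        have hbdia : (N.ultrapower _).sat ⟦f⟧ ⟦g⟧ (.bdia (.bigAnd F)) :=
          (sat_bdia _ _).2 ⟨v, hv, (sat_bigAnd _ F).2 hvF⟩
        simpa only [sat_ultrapower_mk_iff, sat_bdia, sat_bigAnd] using hbdia
    exact ⟨⟦v⟧, hR, fun φ hφ => (sat_ultrapower_mk_iff _ N f v φ).2 (hT φ hφ)⟩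

def ModEquiv (M N : LHSModel) (p : M.W × M.W) (q : N.W × N.W) : Prop :=
  ∀ φ, M.sat p.1 p.2 φ ↔ N.sat q.1 q.2 φ

variable {M N : LHSModel}

theorem ModEquiv.symm {p : M.W × M.W} {q : N.W × N.W} (h : ModEquiv M N p q) :
    ModEquiv N M q p :=
  fun φ => (h φ).symm

theorem modEquiv_of_forall_imp {p : M.W × M.W} {q : N.W × N.W}
    (h : ∀ φ, M.sat p.1 p.2 φ → N.sat q.1 q.2 φ) : ModEquiv M N p q :=
  fun φ => ⟨h φ, fun hN => not_not.1 fun hM => h (.neg φ) hM hN⟩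

theorem ModEquiv.exists_left (hN : N.IsModallySaturated) {s t v : M.W} {s' t' : N.W}
    (h : ModEquiv M N (s, t) (s', t')) (hv : M.R s v) :
    ∃ v', N.R s' v' ∧ ModEquiv M N (v, t) (v', t') := by
  obtain ⟨v', hv', hT⟩ := (hN s' t' {φ | M.sat v t φ}).1 fun F hF => by
    have hdia : M.sat s t (.dia (.bigAnd F)) := (M.sat_dia _).2 ⟨v, hv, (M.sat_bigAnd F).2 hF⟩
    simpa only [sat_dia, sat_bigAnd] using (h _).1 hdia
  exact ⟨v', hv', modEquiv_of_forall_imp hT⟩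

theorem ModEquiv.exists_right (hN : N.IsModallySaturated) {s t v : M.W} {s' t' : N.W}
    (h : ModEquiv M N (s, t) (s', t')) (hv : M.R t v) :
    ∃ v', N.R t' v' ∧ ModEquiv M N (s, v) (s', v') := by
  obtain ⟨v', hv', hT⟩ := (hN s' t' {φ | M.sat s v φ}).2 fun F hF => by
    have hbdia : M.sat s t (.bdia (.bigAnd F)) :=
      (M.sat_bdia _).2 ⟨v, hv, (M.sat_bigAnd F).2 hF⟩
    simpa only [sat_bdia, sat_bigAnd] using (h _).1 hbdia
  exact ⟨v', hv', modEquiv_of_forall_imp hT⟩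

theorem isBisim_modEquiv (hM : M.IsModallySaturated) (hN : N.IsModallySaturated) :
    IsBisim M N (ModEquiv M N) := fun _ _ _ _ h =>
  ⟨fun i => h (.pl i), fun i => h (.pr i), h .I,
    fun _ hv => h.exists_left hN hv, fun _ hv => h.exists_right hN hv,
    fun _ hv => (h.symm.exists_left hM hv).imp fun _ => And.imp_right ModEquiv.symm,
    fun _ hv => (h.symm.exists_right hM hv).imp fun _ => And.imp_right ModEquiv.symm⟩

end LHSModel

open LHSModel

theorem InvariantForLHSBisim.fosat_of_modEquiv {α : FOForm} (hα : InvariantForLHSBisim α)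
    (hfv : α.freeVars ⊆ {0, 1}) {M N : LHSModel} {g : ℕ → M.W} {g' : ℕ → N.W}
    (h : ModEquiv M N (g 0, g 1) (g' 0, g' 1)) (hg : FOsat M g α) : FOsat N g' α := by
  let U := hyperfilter ℕ
  have hpair (P : LHSModel) (a b : P.W) : (fun n => P.toUltrapower U (if n = 0 then a else b)) =
      fun n => if n = 0 then P.toUltrapower U a else P.toUltrapower U b :=
    funext fun n => apply_ite _ _ _ _
  have hU : ModEquiv (M.ultrapower U) (N.ultrapower U)
      (M.toUltrapower U (g 0), M.toUltrapower U (g 1))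
      (N.toUltrapower U (g' 0), N.toUltrapower U (g' 1)) :=
    fun φ => by simpa only [sat_toUltrapower_iff] using h φ
  have hinv := hα _ _ _ _ _ _ _
    (isBisim_modEquiv (isModallySaturated_ultrapower M) (isModallySaturated_ultrapower N)) hU
  rw [fosat_iff_of_freeVars_subset hfv, ← fosat_toUltrapower_iff U, hpair] at hg ⊢
  exact hinv.1 hg

theorem fosat_compactness {ι : Type} (T : ι → FOForm)
    (h : ∀ F : Finset ι, ∃ (M : LHSModel) (g : ℕ → M.W), ∀ i ∈ F, FOsat M g (T i)) :
    ∃ (M : LHSModel) (g : ℕ → M.W), ∀ i, FOsat M g (T i) := by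
  choose Ms gs hgs using h
  let U : Ultrafilter (Finset ι) := .of atTop
  refine ⟨ultraproduct U Ms, fun n => ⟦fun F => gs F n⟧, fun i => ?_⟩
  rw [fosat_ultraproduct_iff]
  have hi : ∀ᶠ F in (U : Filter (Finset ι)), {i} ≤ F :=
    Ultrafilter.of_le atTop (eventually_ge_atTop ({i} : Finset ι))
  exact hi.mono fun F hF => hgs F i (Finset.singleton_subset_iff.1 hF)

theorem exists_finset_of_entails (Γ : Set FOForm) (β : FOForm)
    (h : ∀ (M : LHSModel) (g : ℕ → M.W), (∀ γ ∈ Γ, FOsat M g γ) → FOsat M g β) :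
    ∃ F : Finset FOForm, ↑F ⊆ Γ ∧
      ∀ (M : LHSModel) (g : ℕ → M.W), (∀ γ ∈ F, FOsat M g γ) → FOsat M g β := by
  classical
  by_contra! hne
  have hfin (F : Finset ↥(insert β.neg Γ)) :
      ∃ (M : LHSModel) (g : ℕ → M.W), ∀ γ ∈ F, FOsat M g γ.1 := by
    obtain ⟨M, g, hF, hβ⟩ := hne ((F.map (.subtype _)).erase β.neg) fun γ hγ => by
      obtain ⟨hγβ, hγF⟩ := Finset.mem_erase.1 hγ
      obtain ⟨γ, -, rfl⟩ := Finset.mem_map.1 hγF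
      exact γ.2.resolve_left hγβ
    refine ⟨M, g, fun γ hγ => ?_⟩
    by_cases hγβ : γ.1 = β.neg
    · rw [hγβ]
      exact hβ
    · exact hF _ (Finset.mem_erase.2 ⟨hγβ, Finset.mem_map_of_mem _ hγ⟩)
  obtain ⟨M, g, hM⟩ := fosat_compactness Subtype.val hfin
  exact hM ⟨β.neg, Set.mem_insert _ _⟩
    (h M g fun γ hγ => hM ⟨γ, Set.mem_insert_of_mem _ hγ⟩)

theorem exists_finset_of_entails_stTr (Θ : Set LHSForm) (β : FOForm)
    (h : ∀ (M : LHSModel) (g : ℕ → M.W), (∀ φ ∈ Θ, M.sat (g 0) (g 1) φ) →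
      FOsat M g β) :
    ∃ F : Finset LHSForm, ↑F ⊆ Θ ∧
      ∀ (M : LHSModel) (g : ℕ → M.W), (∀ φ ∈ F, M.sat (g 0) (g 1) φ) →
        FOsat M g β := by
  classical
  obtain ⟨F, hFΓ, hF⟩ := exists_finset_of_entails (stTr 0 1 '' Θ) β fun M g hΘ =>
    h M g fun φ hφ => (fosat_stTr M φ 0 1 g).1 (hΘ _ ⟨φ, hφ, rfl⟩)
  obtain ⟨F, hFΘ, rfl⟩ := Finset.subset_set_image_iff.1 hFΓ
  refine ⟨F, hFΘ, fun M g hMF => hF M g fun γ hγ => ?_⟩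
  obtain ⟨φ, hφ, rfl⟩ := Finset.mem_image.1 hγ
  exact (fosat_stTr M φ 0 1 g).2 (hMF φ hφ)

theorem InvariantForLHSBisim.fosat_of_modal_consequences {α : FOForm}
    (hα : InvariantForLHSBisim α) (hfv : α.freeVars ⊆ {0, 1}) (N : LHSModel) (g : ℕ → N.W)
    (h : ∀ φ : LHSForm, (∀ (M : LHSModel) (g' : ℕ → M.W), FOsat M g' α →
      M.sat (g' 0) (g' 1) φ) → N.sat (g 0) (g 1) φ) :
    FOsat N g α := by
  -- Otherwise a finite part of the modal theory of `(g 0, g 1)` refutes `α`, and the negation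
  -- of its conjunction is a modal consequence of `α` false at `(g 0, g 1)`.
  obtain ⟨M, g', hαM, hsub⟩ : ∃ (M : LHSModel) (g' : ℕ → M.W),
      FOsat M g' α ∧ ∀ φ, N.sat (g 0) (g 1) φ → M.sat (g' 0) (g' 1) φ := by
    by_contra! hne
    obtain ⟨F, hF, hFα⟩ := exists_finset_of_entails_stTr {φ | N.sat (g 0) (g 1) φ} α.neg
      fun M g' hth hαM => by
        obtain ⟨φ, hNφ, hMφ⟩ := hne M g' hαM
        exact hMφ (hth φ hNφ)
    exact h (.neg (.bigAnd F)) (fun M g' hαM hF' => hFα M g' ((M.sat_bigAnd F).1 hF') hαM)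
      ((N.sat_bigAnd F).2 hF)
  exact hα.fosat_of_modEquiv hfv (modEquiv_of_forall_imp hsub).symm hαM

/-- van Benthem characterization theorem for LHS: a first-order formula α(x,y)
of the correspondence language (with free variables among x = 0 and y = 1) is
invariant under LHS-bisimulation iff it is logically equivalent to the standard
translation of some LHS formula. -/
theorem vanBenthem_characterization (α : FOForm)
    (hfv : α.freeVars ⊆ {0, 1}) :
    InvariantForLHSBisim α ↔
      ∃ φ : LHSForm, ∀ (M : LHSModel) (g : ℕ → M.W),
        FOsat M g α ↔ FOsat M g (stTr 0 1 φ) := by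
  constructor
  · intro hα
    obtain ⟨F, hFα, hF⟩ := exists_finset_of_entails_stTr
      {φ | ∀ (M : LHSModel) (g : ℕ → M.W), FOsat M g α → M.sat (g 0) (g 1) φ} α
      (hα.fosat_of_modal_consequences hfv)
    refine ⟨.bigAnd F, fun M g => ?_⟩
    rw [fosat_stTr, sat_bigAnd]
    exact ⟨fun hg φ hφ => hFα hφ M g hg, hF M g⟩
  · rintro ⟨φ, hφ⟩ M M' Z s t s' t' hZ hst
    rw [hφ, hφ, fosat_stTr, fosat_stTr]
    exact hZ.sat_iff φ hst
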